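/- arXiv:2401.02820 — 2 statements merged into one kernel-verified Lean document; each statement's English description precedes it below -/
import Mathlib

section
/- Fix an integer N ≥ 1 and ζ ∈ ℂ∖{0}. In the multivariate formal power series ring ℂ⟦u₁,u₂,…⟧ one has Σ_{λ∈𝒫} t_N(ζ;λ)·u_λ = (1 + Σ_{m≥1}(ζ^m + ζ^{−m})·u_m^{N·m}) · (Σ_{λ∈𝒫} u_λ); equivalently, the u-bracket of t_N(ζ;·) equals the theta-like series A_N(ζ,u) := 1 + Σ_{m≥1}(ζ^m+ζ^{−m})u_m^{Nm}. -/
open scoped Classical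
open Finset

noncomputable section

/-- A partition: a finitely supported multiplicity function on the positive integers. -/
abbrev Ptn : Type := ℕ+ →₀ ℕ

/-- The size `|λ| = Σ_m m · r_m(λ)` of a partition. -/
def psize (l : Ptn) : ℕ := l.sum fun m r => (m : ℕ) * r

/-- The power series `Σ_λ f(λ) u_λ ∈ ℂ⟦u₁,u₂,…⟧`: its coefficient on the monomial
`u_λ = ∏_m u_m^{r_m(λ)}` is `f(λ)`. -/
def useries (f : Ptn → ℂ) : MvPowerSeries ℕ+ ℂ := f

/-- The u-bracket `⟨f⟩_u = (Σ_λ f(λ)u_λ)·(Σ_λ u_λ)⁻¹`. -/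
def ubracket (f : Ptn → ℂ) : MvPowerSeries ℕ+ ℂ :=
  useries f * (useries fun _ => 1)⁻¹

/-- The power series `Σ_λ f(λ) q^{|λ|}`; the coefficient of `q^n` is `Σ_{|λ|=n} f(λ)`
(a finite sum, written here as a `tsum`). -/
def qseries (f : Ptn → ℂ) : PowerSeries ℂ :=
  PowerSeries.mk fun n => ∑' l : {l : Ptn // psize l = n}, f l

/-- The q-bracket `⟨f⟩_q`. -/
def qbracket (f : Ptn → ℂ) : PowerSeries ℂ :=
  qseries f * (qseries fun _ => 1)⁻¹

/-- `α` is a set partition of `{1,…,k}` (as `Fin k`). -/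
def IsSetPtn {k : ℕ} (α : Finset (Finset (Fin k))) : Prop :=
  (∀ A ∈ α, A.Nonempty) ∧ ∀ x : Fin k, ∃! A, A ∈ α ∧ x ∈ A

/-- `Π(k)`: the set of set partitions of `{1,…,k}`. -/
def setPtns (k : ℕ) : Finset (Finset (Finset (Fin k))) :=
  Finset.univ.filter IsSetPtn

/-- `μ(α,1̂) = (−1)^{|α|+1}(|α|−1)!`. -/
def muTop {k : ℕ} (α : Finset (Finset (Fin k))) : ℂ :=
  (-1) ^ (α.card + 1) * (α.card - 1).factorial

/-- The connected u-bracket `⟨f₁ ⊗ ⋯ ⊗ f_k⟩_u`. -/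
def connU {k : ℕ} (f : Fin k → Ptn → ℂ) : MvPowerSeries ℕ+ ℂ :=
  ∑ α ∈ setPtns k, MvPowerSeries.C (muTop α) *
    ∏ A ∈ α, ubracket fun l => ∏ a ∈ A, f a l

/-- The connected q-bracket `⟨f₁ ⊗ ⋯ ⊗ f_k⟩_q`. -/
def connQ {k : ℕ} (f : Fin k → Ptn → ℂ) : PowerSeries ℂ :=
  ∑ α ∈ setPtns k, PowerSeries.C (muTop α) *
    ∏ A ∈ α, qbracket fun l => ∏ a ∈ A, f a l

/-- `t_N(ζ;λ) = 1 + Σ_{m≥1}(ζ^m + ζ^{−m})·𝟙[r_m(λ) ≥ Nm]`. -/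
def tFn (N : ℕ) (ζ : ℂ) (l : Ptn) : ℂ :=
  1 + ∑ m ∈ l.support,
    (ζ ^ (m : ℕ) + ζ ^ (-((m : ℕ) : ℤ))) * (if N * (m : ℕ) ≤ l m then 1 else 0)

/-- `s(ρ;λ) = ρ/(1−ρ) + 1/2 + Σ_{m≥1}(ρ^m − ρ^{−m})·r_m(λ)`. -/
def sFn (ρ : ℂ) (l : Ptn) : ℂ :=
  ρ / (1 - ρ) + 1 / 2 + ∑ m ∈ l.support,
    (ρ ^ (m : ℕ) - ρ ^ (-((m : ℕ) : ℤ))) * (l m : ℂ)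

/-- The theta-like series `A_N(ζ,u) = 1 + Σ_{m≥1}(ζ^m + ζ^{−m}) u_m^{Nm}`,
given by its coefficients: the coefficient of the monomial `u_m^{Nm}` is `ζ^m + ζ^{−m}`,
the constant term is `1`, and all other coefficients vanish. -/
def thetaA (N : ℕ) (ζ : ℂ) : MvPowerSeries ℕ+ ℂ := fun e =>
  (if e = 0 then 1 else 0) +
    ∑' m : ℕ+, if e = Finsupp.single m (N * (m : ℕ)) then ζ ^ (m : ℕ) + ζ ^ (-((m : ℕ) : ℤ)) else 0


lemma hsel (e d : Ptn) (c : ℂ) :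
    (∑ p ∈ Finset.HasAntidiagonal.antidiagonal e, (if p.1 = d then c else 0)) =
      if d ≤ e then c else 0 := by
  by_cases h : d ≤ e
  · rw [if_pos h]
    have hmem : ((d, e - d) : Ptn × Ptn) ∈ Finset.HasAntidiagonal.antidiagonal e := by
      rw [Finset.HasAntidiagonal.mem_antidiagonal]
      exact add_tsub_cancel_of_le h
    refine (Finset.sum_eq_single_of_mem _ hmem ?_).trans (by simp)
    rintro ⟨p1, p2⟩ hp hne
    rw [Finset.HasAntidiagonal.mem_antidiagonal] at hp
    rcases eq_or_ne p1 d with h1 | h1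
    · subst h1
      exfalso
      apply hne
      have hp2 : p2 = e - p1 := eq_tsub_of_add_eq ((add_comm p2 p1).trans hp)
      rw [hp2]
    · simp [h1]
  · rw [if_neg h]
    apply Finset.sum_eq_zero
    rintro ⟨p1, p2⟩ hp
    rw [Finset.HasAntidiagonal.mem_antidiagonal] at hp
    rcases eq_or_ne p1 d with h1 | h1
    · exact absurd (h1 ▸ hp ▸ le_add_right le_rfl : d ≤ e) h
    · simp [h1]

theorem stmt0 (N : ℕ) (hN : 1 ≤ N) (ζ : ℂ) (hζ : ζ ≠ 0) :
    useries (tFn N ζ) = thetaA N ζ * useries (fun _ => 1) ∧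
      ubracket (tFn N ζ) = thetaA N ζ := by
  set c : ℕ+ → ℂ := fun m => ζ ^ (m : ℕ) + ζ ^ (-((m : ℕ) : ℤ)) with hc
  have h1 : useries (tFn N ζ) = thetaA N ζ * useries (fun _ => 1) := by
    funext e
    have hmul : (thetaA N ζ * useries fun _ => 1) e =
        ∑ p ∈ Finset.HasAntidiagonal.antidiagonal e, thetaA N ζ p.1 := by
      have := MvPowerSeries.coeff_mul e (thetaA N ζ) (useries fun _ => 1)
      exact this.trans (Finset.sum_congr rfl fun p _ => mul_one _)
    rw [hmul]
    have htheta : ∀ d : Ptn, d ≤ e → thetaA N ζ d =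
        (if d = 0 then 1 else 0) +
          ∑ m ∈ e.support, (if d = Finsupp.single m (N * (m : ℕ)) then c m else 0) := by
      intro d hd
      unfold thetaA
      congr 1
      apply tsum_eq_sum
      intro m hm
      rw [if_neg]
      intro hdm
      apply hm
      rw [Finsupp.mem_support_iff]
      have hNm : N * (m : ℕ) ≤ e m := by
        have := hd m
        rw [hdm, Finsupp.single_eq_same] at this
        exact this
      have : 1 ≤ N * (m : ℕ) := Nat.one_le_iff_ne_zero.mpr
        (Nat.mul_ne_zero (Nat.one_le_iff_ne_zero.mp hN) m.pos.ne')
      omega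
    rw [Finset.sum_congr rfl fun p hp => htheta p.1 (by
      rw [Finset.HasAntidiagonal.mem_antidiagonal] at hp
      exact hp ▸ le_add_right le_rfl)]
    rw [Finset.sum_add_distrib, hsel, Finset.sum_comm]
    simp only [hsel]
    rw [if_pos (show (0 : Ptn) ≤ e from zero_le)]
    show (1 + ∑ m ∈ e.support, c m * (if N * (m : ℕ) ≤ e m then 1 else 0)) = _
    congr 1
    apply Finset.sum_congr rfl
    intro m hm
    rw [if_congr Finsupp.single_le_iff rfl rfl]
    by_cases h : N * (m : ℕ) ≤ e m <;> simp [h]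
  refine ⟨h1, ?_⟩
  unfold ubracket
  rw [h1, mul_assoc, MvPowerSeries.mul_inv_cancel, mul_one]
  simp only [ne_eq]
  have : MvPowerSeries.constantCoeff (useries fun _ => 1) = 1 := rfl
  rw [this]
  exact one_ne_zero
end
end

section
/- Let λ be a partition and z ∈ ℂ with 0 < |z| < 2π and z such that e^z ≠ 1. Then s(e^z; λ) = −1/z + 2·Σ_{k≥2, k even} S_k(λ)·z^{k−1}/(k−1)!, where the series on the right converges absolutely for |z| < 2π. -/
open Finset Real

noncomputable def Zc : ℝ := ∑' n : ℕ, 1 / (n : ℝ) ^ 2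

lemma Zc_nonneg : 0 ≤ Zc := tsum_nonneg fun n => by positivity

lemma zeta_le (t : ℕ) (ht : 1 ≤ t) : (∑' n : ℕ, 1 / (n : ℝ) ^ (2 * t)) ≤ Zc := by
  apply Summable.tsum_le_tsum _ ((Real.summable_one_div_nat_pow).2 (by omega))
    ((Real.summable_one_div_nat_pow).2 one_lt_two)
  intro n
  rcases Nat.eq_zero_or_pos n with rfl | hn
  · norm_num [zero_pow (show 2 * t ≠ 0 by omega)]
  · apply one_div_le_one_div_of_le (by positivity)
    exact pow_le_pow_right₀ (by exact_mod_cast hn) (by omega)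

lemma bern_div_fact_le (t : ℕ) (ht : 1 ≤ t) :
    |(bernoulli (2 * t) : ℝ)| / ((2 * t).factorial : ℝ) ≤ 2 * Zc / (2 * π) ^ (2 * t) := by
  have hs := hasSum_zeta_nat (k := t) (by omega)
  have hS0 : 0 ≤ ∑' n : ℕ, 1 / (n : ℝ) ^ (2 * t) := tsum_nonneg fun n => by positivity
  have htsum := hs.tsum_eq
  have habs : |(-1 : ℝ) ^ (t + 1) * (2 : ℝ) ^ (2 * t - 1) * π ^ (2 * t) *
      (bernoulli (2 * t) : ℝ) / ((2 * t).factorial : ℝ)| =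
      (2 : ℝ) ^ (2 * t - 1) * π ^ (2 * t) * |(bernoulli (2 * t) : ℝ)| / ((2 * t).factorial : ℝ) := by
    rw [abs_div, abs_mul, abs_mul, abs_mul, abs_pow, abs_neg, abs_one, one_pow, one_mul,
      abs_pow, abs_pow, abs_of_pos (show (0:ℝ) < 2 by norm_num), abs_of_pos pi_pos, Nat.abs_cast]
  have key : (2 : ℝ) ^ (2 * t - 1) * π ^ (2 * t) * |(bernoulli (2 * t) : ℝ)| /
      ((2 * t).factorial : ℝ) = ∑' n : ℕ, 1 / (n : ℝ) ^ (2 * t) := by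
    rw [← habs, ← htsum, abs_of_nonneg hS0]
  have h2 : (2 : ℝ) ^ (2 * t - 1) = (2 : ℝ) ^ (2 * t) / 2 := by
    rw [eq_div_iff (two_ne_zero), ← pow_succ]
    congr 1; omega
  have hle := le_trans (le_of_eq key) (zeta_le t ht)
  rw [h2] at hle
  have hpip : (0:ℝ) < (2 * π) ^ (2 * t) := by positivity
  have hfp : (0:ℝ) < ((2 * t).factorial : ℝ) := by exact_mod_cast (2 * t).factorial_pos
  rw [div_le_iff₀ hfp] at hle
  rw [div_le_div_iff₀ (by positivity) hpip, mul_pow]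
  calc |(bernoulli (2 * t) : ℝ)| * ((2:ℝ) ^ (2*t) * π ^ (2*t))
      = 2 * ((2:ℝ) ^ (2*t) / 2 * π ^ (2*t) * |(bernoulli (2 * t) : ℝ)|) := by ring
    _ ≤ 2 * (Zc * ((2 * t).factorial : ℝ)) := by linarith
    _ = 2 * Zc * ((2 * t).factorial : ℝ) := by ring

lemma norm_bern_term (z : ℂ) (k : ℕ) :
    ‖((bernoulli k : ℚ) : ℂ) * z ^ k / (k.factorial : ℂ)‖ =
      |(bernoulli k : ℝ)| * ‖z‖ ^ k / (k.factorial : ℝ) := by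
  rw [norm_div, norm_mul, norm_pow]
  norm_num

lemma bern_summable_norm {z : ℂ} (hz : ‖z‖ < 2 * π) :
    Summable (fun k : ℕ => ‖((bernoulli k : ℚ) : ℂ) * z ^ k / (k.factorial : ℂ)‖) := by
  have hc0 : 0 ≤ ‖z‖ / (2 * π) := by positivity
  have hc1 : ‖z‖ / (2 * π) < 1 := (div_lt_one (by positivity)).2 hz
  rw [← summable_nat_add_iff 2]
  have hgeo : Summable (fun n : ℕ =>
      (2 * Zc * (‖z‖ / (2 * π)) ^ 2) * (‖z‖ / (2 * π)) ^ n) :=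
    (summable_geometric_of_lt_one hc0 hc1).mul_left _
  refine Summable.of_nonneg_of_le (fun n => norm_nonneg _) (fun n => ?_) hgeo
  · 
    rw [norm_bern_term]
    rcases Nat.even_or_odd (n + 2) with he | ho
    · obtain ⟨t, ht'⟩ := he
      have ht2 : n + 2 = 2 * t := by omega
      have ht : 1 ≤ t := by omega
      rw [ht2]
      have h1 := bern_div_fact_le t ht
      calc |(bernoulli (2*t) : ℝ)| * ‖z‖ ^ (2*t) / ((2*t).factorial : ℝ)
          = (|(bernoulli (2*t) : ℝ)| / ((2*t).factorial : ℝ)) * ‖z‖ ^ (2*t) := by ring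
        _ ≤ (2 * Zc / (2 * π) ^ (2*t)) * ‖z‖ ^ (2*t) :=
            mul_le_mul_of_nonneg_right h1 (by positivity)
        _ = 2 * Zc * (‖z‖ / (2 * π)) ^ (2*t) := by
            rw [div_pow]; ring
        _ = (2 * Zc * (‖z‖ / (2 * π)) ^ 2) * (‖z‖ / (2 * π)) ^ n := by
            rw [← ht2, pow_add]; ring
    · have hb : bernoulli (n + 2) = 0 := by
        rw [bernoulli_eq_bernoulli'_of_ne_one (by omega)]
        exact bernoulli'_eq_zero_of_odd ho (by omega)
      rw [hb]
      simp only [Rat.cast_zero, abs_zero, zero_mul, zero_div]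
      have := Zc_nonneg
      positivity
open Finset

lemma bern_sum_C (n : ℕ) :
    ∑ k ∈ range n, (n.choose k : ℂ) * ((bernoulli k : ℚ) : ℂ) = if n = 1 then 1 else 0 := by
  have h := congrArg (fun q : ℚ => (q : ℂ)) (sum_bernoulli n)
  push_cast at h
  simpa [apply_ite (fun q : ℚ => (q : ℂ))] using h

lemma cauchy_coeff (z : ℂ) (n : ℕ) :
    ∑ kl ∈ Finset.HasAntidiagonal.antidiagonal n, ((bernoulli kl.1 : ℚ) : ℂ) * z ^ kl.1 / (kl.1.factorial : ℂ) *
      (if kl.2 = 0 then 0 else z ^ kl.2 / (kl.2.factorial : ℂ)) = if n = 1 then z else 0 := by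
  rw [Finset.Nat.sum_antidiagonal_eq_sum_range_succ_mk, Finset.sum_range_succ]
  simp only [Nat.sub_self, if_pos rfl, mul_zero, add_zero]
  have key : ∀ k ∈ range n, ((bernoulli k : ℚ) : ℂ) * z ^ k / (k.factorial : ℂ) *
      (if n - k = 0 then 0 else z ^ (n - k) / ((n - k).factorial : ℂ)) =
      z ^ n / (n.factorial : ℂ) * ((n.choose k : ℂ) * ((bernoulli k : ℚ) : ℂ)) := by
    intro k hk
    rw [mem_range] at hk
    rw [if_neg (Nat.sub_ne_zero_of_lt hk)]
    have hfac : (n.choose k : ℂ) * (k.factorial : ℂ) * ((n - k).factorial : ℂ) = (n.factorial : ℂ) := by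
      exact_mod_cast congrArg (fun m : ℕ => (m : ℂ)) (Nat.choose_mul_factorial_mul_factorial hk.le)
    have hzp : z ^ k * z ^ (n - k) = z ^ n := by
      rw [← pow_add, Nat.add_sub_cancel' hk.le]
    have h1 : (k.factorial : ℂ) ≠ 0 := Nat.cast_ne_zero.2 k.factorial_ne_zero
    have h2 : ((n - k).factorial : ℂ) ≠ 0 := Nat.cast_ne_zero.2 (n - k).factorial_ne_zero
    have h3 : (n.factorial : ℂ) ≠ 0 := Nat.cast_ne_zero.2 n.factorial_ne_zero
    field_simp
    rw [← hzp, ← hfac]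
    ring
  rw [Finset.sum_congr rfl key, ← Finset.mul_sum, bern_sum_C]
  rcases eq_or_ne n 1 with rfl | h
  · simp
  · simp [h]

lemma expHasSum (z : ℂ) : HasSum (fun j : ℕ => z ^ j / (j.factorial : ℂ)) (Complex.exp z) := by
  have h := NormedSpace.expSeries_div_hasSum_exp z
  rwa [← Complex.exp_eq_exp_ℂ] at h

lemma hasSum_exp_sub_one (z : ℂ) :
    HasSum (fun j : ℕ => if j = 0 then 0 else z ^ j / (j.factorial : ℂ)) (Complex.exp z - 1) := by
  have h := (expHasSum z).update 0 0
  have he : Function.update (fun j : ℕ => z ^ j / (j.factorial : ℂ)) 0 0 =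
      fun j : ℕ => if j = 0 then 0 else z ^ j / (j.factorial : ℂ) := by
    funext j
    rw [Function.update_apply]
  rw [he] at h
  simpa [neg_add_eq_sub] using h

lemma summable_norm_exp_sub_one (z : ℂ) :
    Summable (fun j : ℕ => ‖if j = 0 then 0 else z ^ j / (j.factorial : ℂ)‖) := by
  apply Summable.of_nonneg_of_le (fun n => norm_nonneg _)
    (fun n => ?_) (Real.summable_pow_div_factorial (‖z‖))
  rcases eq_or_ne n 0 with rfl | h
  · simp
  · rw [if_neg h, norm_div, norm_pow]
    simp [Complex.norm_natCast]
open Finset Real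

lemma bern_prod {z : ℂ} (hz : ‖z‖ < 2 * π) :
    (∑' k : ℕ, ((bernoulli k : ℚ) : ℂ) * z ^ k / (k.factorial : ℂ)) * (Complex.exp z - 1) = z := by
  rw [← (hasSum_exp_sub_one z).tsum_eq,
    tsum_mul_tsum_eq_tsum_sum_antidiagonal_of_summable_norm (bern_summable_norm hz)
      (summable_norm_exp_sub_one z)]
  have : ∀ n : ℕ, (∑ kl ∈ Finset.HasAntidiagonal.antidiagonal n,
      ((bernoulli kl.1 : ℚ) : ℂ) * z ^ kl.1 / (kl.1.factorial : ℂ) *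
        (if kl.2 = 0 then 0 else z ^ kl.2 / (kl.2.factorial : ℂ))) = if n = 1 then z else 0 :=
    cauchy_coeff z
  rw [tsum_congr this, tsum_ite_eq]

lemma hasSum_A {z : ℂ} (hz : ‖z‖ < 2 * π) (hz0 : z ≠ 0) :
    HasSum (fun k : ℕ => if 2 ≤ k ∧ Even k then
        -((bernoulli k : ℚ) : ℂ) / (2 * k) * z ^ (k - 1) / ((k - 1).factorial : ℂ) else 0)
      (-(1 / (2 * z)) * ((∑' k : ℕ, ((bernoulli k : ℚ) : ℂ) * z ^ k / (k.factorial : ℂ)) - 1 + z / 2)) := by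
  set f : ℕ → ℂ := fun k => ((bernoulli k : ℚ) : ℂ) * z ^ k / (k.factorial : ℂ) with hf
  set A : ℕ → ℂ := fun k => if 2 ≤ k ∧ Even k then
      -((bernoulli k : ℚ) : ℂ) / (2 * k) * z ^ (k - 1) / ((k - 1).factorial : ℂ) else 0 with hA
  have hgsum : HasSum f (∑' k, f k) := (bern_summable_norm hz).of_norm.hasSum
  have hr2 : ∑ i ∈ range 2, f i = 1 - z / 2 := by
    rw [Finset.sum_range_succ, Finset.sum_range_one, hf]
    simp [bernoulli_zero, bernoulli_one]
    norm_num
    ring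
  have hshift : HasSum (fun n => f (n + 2)) ((∑' k, f k) - (1 - z / 2)) := by
    rw [← hr2]
    exact (hasSum_nat_add_iff' 2).2 hgsum
  have hmul := hshift.mul_left (-(1 / (2 * z)))
  have hpt : ∀ n : ℕ, A (n + 2) = -(1 / (2 * z)) * f (n + 2) := by
    intro n
    rcases Nat.even_or_odd n with he | ho
    · simp only [hA, hf]
      rw [if_pos ⟨by omega, by simpa [Nat.even_add] using he⟩]
      have h1 : ((n + 1).factorial : ℂ) ≠ 0 := Nat.cast_ne_zero.2 (n+1).factorial_ne_zero
      have h2 : ((n + 2).factorial : ℂ) ≠ 0 := Nat.cast_ne_zero.2 (n+2).factorial_ne_zero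
      have hfac : ((n + 2).factorial : ℂ) = ((n:ℂ) + 2) * ((n + 1).factorial : ℂ) := by
        rw [Nat.factorial_succ]
        push_cast
        ring
      show -((bernoulli (n+2) : ℚ) : ℂ) / (2 * ((n:ℕ)+2 : ℕ)) * z ^ (n + 2 - 1) / ((n + 2 - 1).factorial : ℂ) = _
      have hsub : n + 2 - 1 = n + 1 := rfl
      rw [hsub]
      have hzp : z ^ (n + 2) = z ^ (n + 1) * z := by rw [← pow_succ]
      rw [hfac, hzp]
      have hn2 : ((n : ℂ) + 2) ≠ 0 := by
        have h : ((n + 2 : ℕ) : ℂ) ≠ 0 := Nat.cast_ne_zero.2 (by omega)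
        push_cast at h
        exact h
      push_cast
      field_simp
    · have hb : bernoulli (n + 2) = 0 := by
        rw [bernoulli_eq_bernoulli'_of_ne_one (by omega)]
        refine bernoulli'_eq_zero_of_odd ?_ (by omega)
        simpa [Nat.odd_add] using ho
      simp only [hA, hf]
      simp [hb, Nat.even_add, Nat.odd_iff.1 ho]
  have hmul' : HasSum (fun n => A (n + 2))
      (-(1 / (2 * z)) * ((∑' k, f k) - 1 + z / 2)) := by
    have : (∑' k, f k) - (1 - z/2) = (∑' k, f k) - 1 + z/2 := by ring
    rw [this] at hmul
    exact HasSum.congr_fun hmul fun n => hpt n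
  have := (hasSum_nat_add_iff (f := A) 2).1 hmul'
  have hA01 : ∑ i ∈ range 2, A i = 0 := by
    rw [Finset.sum_range_succ, Finset.sum_range_one, hA]
    norm_num
  rwa [hA01, add_zero] at this

lemma hasSum_D (z : ℂ) (m : ℕ+) (r : ℕ) :
    HasSum (fun k : ℕ => if 2 ≤ k ∧ Even k then
        (r : ℂ) * ((m : ℕ) : ℂ) ^ (k - 1) * z ^ (k - 1) / ((k - 1).factorial : ℂ) else 0)
      ((r : ℂ) * (Complex.exp (((m : ℕ) : ℂ) * z) - Complex.exp (-(((m : ℕ) : ℂ) * z))) / 2) := by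
  set w : ℂ := ((m : ℕ) : ℂ) * z with hw
  set D : ℕ → ℂ := fun k => if 2 ≤ k ∧ Even k then
      (r : ℂ) * ((m : ℕ) : ℂ) ^ (k - 1) * z ^ (k - 1) / ((k - 1).factorial : ℂ) else 0 with hD
  have hdiff : HasSum (fun j : ℕ => (r : ℂ) / 2 * ((w ^ j - (-w) ^ j) / (j.factorial : ℂ)))
      ((r : ℂ) / 2 * (Complex.exp w - Complex.exp (-w))) := by
    have h := ((expHasSum w).sub (expHasSum (-w))).mul_left ((r : ℂ) / 2)
    refine h.congr_fun fun j => ?_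
    rw [div_sub_div_same]
  have hpt : ∀ j : ℕ, D (j + 1) = (r : ℂ) / 2 * ((w ^ j - (-w) ^ j) / (j.factorial : ℂ)) := by
    intro j
    rcases Nat.even_or_odd j with he | ho
    · simp only [hD]
      rw [if_neg]
      · rw [he.neg_pow, sub_self, zero_div, mul_zero]
      · rintro ⟨-, hev⟩
        rw [Nat.even_add_one] at hev
        exact hev he
    · simp only [hD]
      rw [if_pos ⟨by have := Nat.odd_iff.1 ho; omega,
        by rw [Nat.even_add_one]; exact Nat.not_even_iff_odd.2 ho⟩]
      rw [ho.neg_pow]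
      have hsub : j + 1 - 1 = j := rfl
      rw [hsub, hw, mul_pow]
      ring
  have h1 := hdiff.congr_fun fun j => (hpt j)
  have h2 := (hasSum_nat_add_iff (f := D) 1).1 h1
  have hD0 : ∑ i ∈ range 1, D i = 0 := by
    rw [Finset.sum_range_one, hD]
    norm_num
  rw [hD0, add_zero] at h2
  rw [hw] at h2
  convert h2 using 1
  · rfl
  · rw [hw]; ring

noncomputable section

/-- `S_k(λ) = −B_k/(2k) + Σ_{m≥1} r_m(λ)·m^{k−1}`. -/
def SkFn (k : ℕ) (l : Ptn) : ℂ :=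
  -((bernoulli k : ℚ) : ℂ) / (2 * k) + ∑ m ∈ l.support, (l m : ℂ) * ((m : ℕ) : ℂ) ^ (k - 1)

theorem stmt19 (l : Ptn) (z : ℂ) (hz0 : 0 < ‖z‖) (hz2 : ‖z‖ < 2 * Real.pi)
    (hz1 : Complex.exp z ≠ 1) :
    Summable (fun k : ℕ => if 2 ≤ k ∧ Even k then
        SkFn k l * z ^ (k - 1) / ((k - 1).factorial : ℂ) else 0) ∧
      sFn (Complex.exp z) l =
        -1 / z + 2 * ∑' k : ℕ, if 2 ≤ k ∧ Even k then
          SkFn k l * z ^ (k - 1) / ((k - 1).factorial : ℂ) else 0 := by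
  have hzne : z ≠ 0 := by
    intro h; rw [h] at hz0; simp at hz0
  have hA := hasSum_A hz2 hzne
  have hC : HasSum (fun k : ℕ => ∑ m ∈ l.support, (if 2 ≤ k ∧ Even k then
        (l m : ℂ) * ((m : ℕ) : ℂ) ^ (k - 1) * z ^ (k - 1) / ((k - 1).factorial : ℂ) else 0))
      (∑ m ∈ l.support, (l m : ℂ) *
        (Complex.exp (((m : ℕ) : ℂ) * z) - Complex.exp (-(((m : ℕ) : ℂ) * z))) / 2) :=
    hasSum_sum (fun m _ => hasSum_D z m (l m))
  have hFeq : ∀ k : ℕ, (if 2 ≤ k ∧ Even k then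
        SkFn k l * z ^ (k - 1) / ((k - 1).factorial : ℂ) else 0) =
      (if 2 ≤ k ∧ Even k then
        -((bernoulli k : ℚ) : ℂ) / (2 * k) * z ^ (k - 1) / ((k - 1).factorial : ℂ) else 0) +
      ∑ m ∈ l.support, (if 2 ≤ k ∧ Even k then
        (l m : ℂ) * ((m : ℕ) : ℂ) ^ (k - 1) * z ^ (k - 1) / ((k - 1).factorial : ℂ) else 0) := by
    intro k
    by_cases h : 2 ≤ k ∧ Even k
    · simp only [if_pos h, SkFn]
      rw [add_mul, add_div, Finset.sum_mul, Finset.sum_div]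
    · simp only [if_neg h, Finset.sum_const_zero, add_zero]
  have hFsum : HasSum (fun k : ℕ => if 2 ≤ k ∧ Even k then
      SkFn k l * z ^ (k - 1) / ((k - 1).factorial : ℂ) else 0)
      (-(1 / (2 * z)) * ((∑' k : ℕ, ((bernoulli k : ℚ) : ℂ) * z ^ k / (k.factorial : ℂ)) - 1 + z / 2) +
        ∑ m ∈ l.support, (l m : ℂ) *
          (Complex.exp (((m : ℕ) : ℂ) * z) - Complex.exp (-(((m : ℕ) : ℂ) * z))) / 2) :=
    (hA.add hC).congr_fun fun k => hFeq k
  refine ⟨hFsum.summable, ?_⟩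
  rw [hFsum.tsum_eq]
  have hne : Complex.exp z - 1 ≠ 0 := sub_ne_zero.2 hz1
  have hne' : (1 : ℂ) - Complex.exp z ≠ 0 := sub_ne_zero.2 (Ne.symm hz1)
  have hg : (∑' k : ℕ, ((bernoulli k : ℚ) : ℂ) * z ^ k / (k.factorial : ℂ)) =
      z / (Complex.exp z - 1) := by
    rw [eq_div_iff hne]
    exact bern_prod hz2
  have hmain : Complex.exp z / (1 - Complex.exp z) + 1 / 2 =
      -1 / z + 2 * (-(1 / (2 * z)) *
        ((∑' k : ℕ, ((bernoulli k : ℚ) : ℂ) * z ^ k / (k.factorial : ℂ)) - 1 + z / 2)) := by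
    rw [hg]
    field_simp
    ring
  have hSsum : (2 : ℂ) * ∑ m ∈ l.support, (l m : ℂ) *
      (Complex.exp (((m : ℕ) : ℂ) * z) - Complex.exp (-(((m : ℕ) : ℂ) * z))) / 2 =
      ∑ m ∈ l.support, (Complex.exp (((m : ℕ) : ℂ) * z) -
        Complex.exp (-(((m : ℕ) : ℂ) * z))) * (l m : ℂ) := by
    rw [Finset.mul_sum]
    apply Finset.sum_congr rfl
    intro m hm
    ring
  simp only [sFn]
  rw [mul_add, ← add_assoc, ← hmain, hSsum]
  congr 1
  apply Finset.sum_congr rfl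
  intro m hm
  have h1 : (Complex.exp z) ^ ((m : ℕ) : ℕ) = Complex.exp (((m : ℕ) : ℂ) * z) :=
    (Complex.exp_nat_mul z (m : ℕ)).symm
  have h2 : (Complex.exp z) ^ (-(((m : ℕ) : ℕ) : ℤ)) = Complex.exp (-(((m : ℕ) : ℂ) * z)) := by
    rw [zpow_neg, zpow_natCast, ← Complex.exp_nat_mul, ← Complex.exp_neg]
  rw [h1, h2]

end
end
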